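/- arXiv:1811.03595 — 4 statements merged into one kernel-verified Lean document; each statement's English description precedes it below -/
import Mathlib

section
/- If L is a prefix-free language over a linearly ordered alphabet and the supremum of L (in the lexicographic order on finite and infinite words) exists, then either every word of L is strictly less in the strict (non-prefix) lexicographic order than the supremum, or the supremum itself belongs to L. -/
open Stream'

variable {α : Type*}

/-- Strict (non-prefix) lexicographic order on finite and ω-words. -/
def sLt [LT α] (u v : Seq α) : Prop :=
  ∃ n a b, (∀ i < n, u.get? i = v.get? i) ∧ u.get? n = some a ∧ v.get? n = some b ∧ a < b

/-- Proper prefix order on finite and ω-words. -/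
def pLt (u v : Seq α) : Prop :=
  u ≠ v ∧ ∀ i a, u.get? i = some a → v.get? i = some a

/-- The lexicographic order `<_ℓ` is the union of `<_s` and `<_p`. -/
def lexLt [LT α] (u v : Seq α) : Prop := sLt u v ∨ pLt u v

def lexLe [LT α] (u v : Seq α) : Prop := lexLt u v ∨ u = v

/-- `s` is the supremum of `S` in `(Σ^{≤ω}, <_ℓ)`. -/
def IsSupW [LT α] (S : Set (Seq α)) (s : Seq α) : Prop :=
  (∀ w ∈ S, lexLe w s) ∧ ∀ t, (∀ w ∈ S, lexLe w t) → lexLe s t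

/-- A language is prefix-free: no word is a proper prefix of another. -/
def PrefixFree (L : Set (List α)) : Prop := ∀ u ∈ L, ∀ v ∈ L, u <+: v → u = v

/-!
Suppose some `w ∈ L` is not `<_s`-below the supremum `s`. As an upper bound, `s` is then either
`w` itself or a proper extension of `w`. In the second case `w` is itself an upper bound of `L`:
a word `v ∈ L` above `w` cannot extend `w` (prefix-freeness), and if it branches off `w`
upwards it branches off `s` upwards at the same position, so `s <_ℓ v`. Hence `s ≤_ℓ w <_ℓ s`.
-/

lemma le_of_agree_of_get?_ne {u v : Seq α} {n m : ℕ} (hagree : ∀ i < n, u.get? i = v.get? i)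
    (hne : u.get? m ≠ v.get? m) : n ≤ m :=
  Nat.le_of_not_lt fun hmn => hne (hagree m hmn)

lemma sLt_asymm [Preorder α] {u v : Seq α} (huv : sLt u v) : ¬ sLt v u := by
  obtain ⟨n, a, b, hagree, hua, hvb, hab⟩ := huv
  rintro ⟨m, b', a', hagree', hvb', hua', hba⟩
  have hnm : n ≤ m := le_of_agree_of_get?_ne hagree (by simp [hua', hvb', hba.ne'])
  have hmn : m ≤ n := le_of_agree_of_get?_ne hagree' (by simp [hua, hvb, hab.ne'])
  obtain rfl := le_antisymm hnm hmn
  obtain rfl : a = a' := Option.some.inj (hua.symm.trans hua')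
  obtain rfl : b = b' := Option.some.inj (hvb.symm.trans hvb')
  exact lt_asymm hab hba

lemma not_pLt_of_sLt [Preorder α] {u v : Seq α} (huv : sLt u v) : ¬ pLt v u := by
  obtain ⟨n, a, b, -, hua, hvb, hab⟩ := huv
  rintro ⟨-, hvu⟩
  exact hab.ne (Option.some.inj (hua.symm.trans (hvu n b hvb)))

lemma pLt_asymm {u v : Seq α} (huv : pLt u v) : ¬ pLt v u := by
  rintro ⟨-, hvu⟩
  refine huv.1 (Seq.ext fun i => ?_)
  cases hu : u.get? i with
  | some a => exact (huv.2 i a hu).symm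
  | none =>
    cases hv : v.get? i with
    | none => rfl
    | some b => simpa [hu] using hvu i b hv

lemma lexLt_asymm [Preorder α] {u v : Seq α} (huv : lexLt u v) : ¬ lexLt v u := by
  rcases huv with huv | huv <;> rintro (hvu | hvu)
  exacts [sLt_asymm huv hvu, not_pLt_of_sLt huv hvu, not_pLt_of_sLt hvu huv, pLt_asymm huv hvu]

lemma not_lexLe_of_lexLt [Preorder α] {u v : Seq α} (huv : lexLt u v) : ¬ lexLe v u := by
  rintro (hvu | rfl)
  exacts [lexLt_asymm huv hvu, lexLt_asymm huv huv]

lemma pLt_of_agree_of_get?_eq_none {u v : Seq α} {n : ℕ} (hne : u ≠ v)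
    (hagree : ∀ i < n, u.get? i = v.get? i) (hu : u.get? n = none) : pLt u v := by
  refine ⟨hne, fun i a hua => ?_⟩
  have hin : i < n := Nat.lt_of_not_le fun hni => by simp [Seq.le_stable u hni hu] at hua
  rw [← hagree i hin, hua]

lemma lexLe_or_lexLt [LinearOrder α] (u v : Seq α) : lexLe u v ∨ lexLt v u := by
  by_cases heq : u = v
  · exact Or.inl (Or.inr heq)
  have hdiff : ∃ n, u.get? n ≠ v.get? n := by
    by_contra! hall
    exact heq (Seq.ext hall)
  have hagree : ∀ i < Nat.find hdiff, u.get? i = v.get? i := fun i hi =>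
    not_not.1 (Nat.find_min hdiff hi)
  have hne := Nat.find_spec hdiff
  cases hu : u.get? (Nat.find hdiff) with
  | none => exact Or.inl (Or.inl (Or.inr (pLt_of_agree_of_get?_eq_none heq hagree hu)))
  | some a =>
    cases hv : v.get? (Nat.find hdiff) with
    | none =>
      exact Or.inr (Or.inr (pLt_of_agree_of_get?_eq_none (Ne.symm heq)
        (fun i hi => (hagree i hi).symm) hv))
    | some b =>
      rcases lt_trichotomy a b with hab | rfl | hba
      · exact Or.inl (Or.inl (Or.inl ⟨_, a, b, hagree, hu, hv, hab⟩))
      · exact absurd (hu.trans hv.symm) hne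
      · exact Or.inr (Or.inl ⟨_, b, a, fun i hi => (hagree i hi).symm, hv, hu, hba⟩)

lemma sLt_of_pLt_of_sLt [LT α] {w s v : Seq α} (hws : pLt w s) (hwv : sLt w v) : sLt s v := by
  obtain ⟨n, a, b, hagree, hwa, hvb, hab⟩ := hwv
  refine ⟨n, a, b, fun i hi => ?_, hws.2 n a hwa, hvb, hab⟩
  obtain ⟨c, hwc⟩ := w.ge_stable hi.le hwa
  rw [hws.2 i c hwc, ← hwc, hagree i hi]

lemma isPrefix_of_pLt_ofList {u v : List α} (huv : pLt (Seq.ofList u) (Seq.ofList v)) :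
    u <+: v := by
  rw [List.prefix_iff_getElem?]
  intro i hi
  simpa [Seq.ofList_get?] using huv.2 i u[i] (by simp [Seq.ofList_get?])

lemma lexLe_ofList_of_pLt [LinearOrder α] {L : Set (List α)} (hpf : PrefixFree L) {w : List α}
    (hw : w ∈ L) {s : Seq α} (hws : pLt (Seq.ofList w) s)
    (hs : ∀ t ∈ Seq.ofList '' L, lexLe t s) : ∀ t ∈ Seq.ofList '' L, lexLe t (Seq.ofList w) := by
  rintro _ ⟨v, hv, rfl⟩
  rcases lexLe_or_lexLt (Seq.ofList v) (Seq.ofList w) with hvw | hwv | hwv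
  · exact hvw
  · exact absurd (hs _ ⟨v, hv, rfl⟩) (not_lexLe_of_lexLt (Or.inl (sLt_of_pLt_of_sLt hws hwv)))
  · exact absurd (congrArg Seq.ofList (hpf w hw v hv (isPrefix_of_pLt_ofList hwv))) hwv.1

theorem sup_of_prefixFree [LinearOrder α] (L : Set (List α)) (hpf : PrefixFree L)
    (s : Seq α) (hs : IsSupW (Seq.ofList '' L) s) :
    (∀ w ∈ L, sLt (Seq.ofList w) s) ∨ s ∈ Seq.ofList '' L := by
  refine or_iff_not_imp_left.2 fun hnot => ?_
  obtain ⟨w, hw, hws⟩ := not_forall₂.1 hnot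
  rcases hs.1 _ ⟨w, hw, rfl⟩ with (hws' | hws') | rfl
  · exact absurd hws' hws
  · exact absurd (hs.2 _ (lexLe_ofList_of_pLt hpf hw hws' hs.1)) (not_lexLe_of_lexLt (Or.inr hws'))
  · exact ⟨w, hw, rfl⟩
end

section
/- Let K and L be nonempty prefix-free languages over a totally ordered alphabet whose suprema ⋁K and ⋁L exist in Σ^{≤ω}. Then ⋁(KL) = ⋁K if every word of K is strictly less than ⋁K in the strict order <_s, and ⋁(KL) = (⋁K)·(⋁L) otherwise. Moreover ⋁(KL) ∈ KL if and only if ⋁K ∈ K and ⋁L ∈ L. -/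
open Stream'

variable {α : Type*}

/-!
Write `u ≤ v` for `lexLe u v`; it holds iff `u <_s v` or `u` is a prefix of `v`. If every
`w ∈ K` is `<_s ⋁K`, so is every extension `wv`, and each `w` lies below some `wv`: thus
`⋁(KL) = ⋁K`. Otherwise some `w₀ ∈ K` is a prefix of `⋁K`; by prefix-freeness every other word of
`K` is `<_s w₀`, so `⋁K = w₀` is the maximum of `K`. An upper bound of `KL` that extends `w₀` has
the form `w₀t'` with `t'` bounding `L`, and one that does not exceeds `w₀` already inside `w₀`;
so `⋁(KL) = w₀·⋁L`, which lies in `KL` iff `⋁L ∈ L`, by cancelling `w₀`.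
-/

namespace Stream'.Seq

def IsPrefix (u v : Seq α) : Prop := ∀ i a, u.get? i = some a → v.get? i = some a

namespace IsPrefix

@[refl]
theorem refl (u : Seq α) : IsPrefix u u := fun _ _ h => h

theorem trans {u v w : Seq α} (h₁ : IsPrefix u v) (h₂ : IsPrefix v w) : IsPrefix u w :=
  fun i a h => h₂ i a (h₁ i a h)

theorem antisymm {u v : Seq α} (h₁ : IsPrefix u v) (h₂ : IsPrefix v u) : u = v := by
  refine Seq.ext fun n => ?_
  cases hu : u.get? n with
  | some a => exact (h₁ n a hu).symm
  | none =>
    cases hv : v.get? n with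
    | some b => rw [← hu, h₂ n b hv]
    | none => rfl

theorem total {u v s : Seq α} (hu : IsPrefix u s) (hv : IsPrefix v s) :
    IsPrefix u v ∨ IsPrefix v u := by
  by_contra! ⟨huv, hvu⟩
  obtain ⟨i, a, hua, hva⟩ : ∃ i a, u.get? i = some a ∧ v.get? i ≠ some a := by
    simpa [IsPrefix] using huv
  refine hvu fun j b hvb => ?_
  have hji : j < i := by
    by_contra! hij
    obtain ⟨c, hvc⟩ := v.ge_stable hij hvb
    exact hva (hvc.trans ((hv i c hvc).symm.trans (hu i a hua)))
  obtain ⟨c, huc⟩ := u.ge_stable hji.le hua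
  exact huc.trans ((hu j c huc).symm.trans (hv j b hvb))

end IsPrefix

theorem isPrefix_cons_cons_iff {a : α} {u v : Seq α} :
    IsPrefix (cons a u) (cons a v) ↔ IsPrefix u v := by
  refine ⟨fun h i b hb => h (i + 1) b hb, fun h i b hb => ?_⟩
  cases i with
  | zero => exact hb
  | succ i => exact h i b hb

theorem isPrefix_ofList_append (w : List α) (u : Seq α) :
    IsPrefix (ofList w) ((ofList w).append u) := by
  induction w with
  | nil => intro i a h; simp [ofList_nil, get?_nil] at h
  | cons a w ih => rwa [ofList_cons, cons_append, isPrefix_cons_cons_iff]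

theorem IsPrefix.exists_eq_ofList_append {w : List α} {t : Seq α}
    (h : IsPrefix (ofList w) t) : ∃ t', t = (ofList w).append t' := by
  induction w generalizing t with
  | nil => exact ⟨t, by rw [ofList_nil, nil_append]⟩
  | cons a w ih =>
    rw [ofList_cons] at h
    have ht : t = cons a t.tail := head_eq_some (h 0 a (get?_cons_zero a _))
    rw [ht, isPrefix_cons_cons_iff] at h
    obtain ⟨t', ht'⟩ := ih h
    exact ⟨t', by rw [ht, ht', ofList_cons, cons_append]⟩

theorem IsPrefix.prefix_of_ofList {w v : List α} (h : IsPrefix (ofList w) (ofList v)) :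
    w <+: v :=
  List.prefix_iff_getElem?.2 fun i hi => by
    simpa [ofList_get?] using h i w[i] (by simp [ofList_get?, hi])

theorem ofList_append_injective (w : List α) : Function.Injective (ofList w).append := by
  induction w with
  | nil => intro u v h; simpa [ofList_nil, nil_append] using h
  | cons a w ih =>
    intro u v h
    simp only [ofList_cons, cons_append] at h
    exact ih (cons_right_injective a h)

end Stream'.Seq

open Stream'.Seq (IsPrefix)

theorem PrefixFree.eq_of_isPrefix {K : Set (List α)} (hK : PrefixFree K) {w v : List α}
    (hw : w ∈ K) (hv : v ∈ K) (h : IsPrefix (Seq.ofList w) (Seq.ofList v)) : w = v :=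
  hK w hw v hv h.prefix_of_ofList

section LT

variable [LT α]

theorem lexLe_iff {u v : Seq α} : lexLe u v ↔ sLt u v ∨ IsPrefix u v := by
  refine ⟨?_, ?_⟩
  · rintro ((h | h) | rfl)
    · exact Or.inl h
    · exact Or.inr h.2
    · exact Or.inr (IsPrefix.refl u)
  · rintro (h | h)
    · exact Or.inl (Or.inl h)
    · by_cases huv : u = v
      · exact Or.inr huv
      · exact Or.inl (Or.inr ⟨huv, h⟩)

theorem sLt_of_isPrefix_of_sLt {u u' t : Seq α} (h : IsPrefix u u') (h' : sLt u t) :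
    sLt u' t := by
  obtain ⟨n, a, b, hn, ha, hb, hab⟩ := h'
  refine ⟨n, a, b, fun i hi => ?_, h n a ha, hb, hab⟩
  obtain ⟨c, hc⟩ := u.ge_stable hi.le ha
  rw [h i c hc, ← hc, hn i hi]

theorem sLt_of_sLt_of_isPrefix {u t t' : Seq α} (h : sLt u t) (h' : IsPrefix t t') :
    sLt u t' := by
  obtain ⟨n, a, b, hn, ha, hb, hab⟩ := h
  refine ⟨n, a, b, fun i hi => ?_, ha, h' n b hb, hab⟩
  obtain ⟨c, hc⟩ := t.ge_stable hi.le hb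
  rw [hn i hi, hc, h' i c hc]

theorem sLt_or_isPrefix_of_isPrefix_of_sLt {u v w : Seq α} (h : IsPrefix u v) (h' : sLt v w) :
    sLt u w ∨ IsPrefix u w := by
  obtain ⟨n, b, c, hn, hb, hc, hbc⟩ := h'
  cases hu : u.get? n with
  | some a =>
    obtain rfl : a = b := Option.some.inj ((h n a hu).symm.trans hb)
    refine Or.inl ⟨n, a, c, fun i hi => ?_, hu, hc, hbc⟩
    obtain ⟨e, he⟩ := u.ge_stable hi.le hu
    rw [he, ← hn i hi, h i e he]
  | none =>
    refine Or.inr fun i a ha => ?_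
    have hin : i < n := by
      by_contra! hni
      simp [u.le_stable hni hu] at ha
    rw [← hn i hin]
    exact h i a ha

theorem sLt_or_isPrefix_of_sLt_of_isPrefix {w s u : Seq α} (h : sLt w s) (h' : IsPrefix u s) :
    sLt w u ∨ IsPrefix u w := by
  obtain ⟨n, a, b, hn, ha, hb, hab⟩ := h
  cases hu : u.get? n with
  | some c =>
    obtain rfl : c = b := Option.some.inj ((h' n c hu).symm.trans hb)
    refine Or.inl ⟨n, a, c, fun i hi => ?_, ha, hu, hab⟩
    obtain ⟨e, he⟩ := u.ge_stable hi.le hu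
    rw [he, hn i hi, h' i e he]
  | none =>
    refine Or.inr fun i c hc => ?_
    have hin : i < n := by
      by_contra! hni
      simp [u.le_stable hni hu] at hc
    rw [hn i hin]
    exact h' i c hc

end LT

section Preorder

variable [Preorder α]

theorem sLt_irrefl (u : Seq α) : ¬ sLt u u := by
  rintro ⟨n, a, b, -, ha, hb, hab⟩
  obtain rfl : a = b := Option.some.inj (ha.symm.trans hb)
  exact lt_irrefl a hab

theorem sLt_trans {u v w : Seq α} (h₁ : sLt u v) (h₂ : sLt v w) : sLt u w := by
  obtain ⟨n, a, b, hn, ha, hb, hab⟩ := h₁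
  obtain ⟨m, c, d, hm, hc, hd, hcd⟩ := h₂
  rcases lt_trichotomy n m with h | rfl | h
  · exact ⟨n, a, b, fun i hi => (hn i hi).trans (hm i (hi.trans h)), ha, hm n h ▸ hb, hab⟩
  · obtain rfl : b = c := Option.some.inj (hb.symm.trans hc)
    exact ⟨n, a, d, fun i hi => (hn i hi).trans (hm i hi), ha, hd, hab.trans hcd⟩
  · exact ⟨m, c, d, fun i hi => (hn i (hi.trans h)).trans (hm i hi), (hn m h).trans hc, hd, hcd⟩

theorem lexLe_trans {u v w : Seq α} (h₁ : lexLe u v) (h₂ : lexLe v w) : lexLe u w := by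
  rw [lexLe_iff] at *
  rcases h₁ with h₁ | h₁ <;> rcases h₂ with h₂ | h₂
  · exact Or.inl (sLt_trans h₁ h₂)
  · exact Or.inl (sLt_of_sLt_of_isPrefix h₁ h₂)
  · exact sLt_or_isPrefix_of_isPrefix_of_sLt h₁ h₂
  · exact Or.inr (h₁.trans h₂)

theorem lexLe_antisymm {u v : Seq α} (h₁ : lexLe u v) (h₂ : lexLe v u) : u = v := by
  rw [lexLe_iff] at h₁ h₂
  rcases h₁ with h₁ | h₁ <;> rcases h₂ with h₂ | h₂
  · exact (sLt_irrefl u (sLt_trans h₁ h₂)).elim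
  · exact (sLt_irrefl u (sLt_of_sLt_of_isPrefix h₁ h₂)).elim
  · exact (sLt_irrefl v (sLt_of_sLt_of_isPrefix h₂ h₁)).elim
  · exact h₁.antisymm h₂

theorem IsSupW.unique {S : Set (Seq α)} {s t : Seq α} (hs : IsSupW S s) (ht : IsSupW S t) :
    s = t :=
  lexLe_antisymm (hs.2 t ht.1) (ht.2 s hs.1)

theorem sLt_cons_cons_iff {a : α} {u v : Seq α} :
    sLt (Seq.cons a u) (Seq.cons a v) ↔ sLt u v := by
  constructor
  · rintro ⟨_ | n, b, c, hn, hb, hc, hbc⟩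
    · rw [Seq.get?_cons_zero, Option.some.injEq] at hb hc
      subst hb hc
      exact (lt_irrefl a hbc).elim
    · exact ⟨n, b, c, fun i hi => hn (i + 1) (by omega), hb, hc, hbc⟩
  · rintro ⟨n, b, c, hn, hb, hc, hbc⟩
    refine ⟨n + 1, b, c, fun i hi => ?_, hb, hc, hbc⟩
    cases i with
    | zero => rfl
    | succ i => exact hn i (by omega)

theorem lexLe_ofList_append_append_iff {w : List α} {u v : Seq α} :
    lexLe ((Seq.ofList w).append u) ((Seq.ofList w).append v) ↔ lexLe u v := by
  induction w with
  | nil => rw [Seq.ofList_nil, Seq.nil_append, Seq.nil_append]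
  | cons a w ih =>
    rw [← ih, lexLe_iff, lexLe_iff, Seq.ofList_cons, Seq.cons_append, Seq.cons_append,
      sLt_cons_cons_iff, Seq.isPrefix_cons_cons_iff]

theorem sLt_ofList_append_append {w w' : List α} (h : sLt (Seq.ofList w) (Seq.ofList w'))
    (u u' : Seq α) : sLt ((Seq.ofList w).append u) ((Seq.ofList w').append u') :=
  sLt_of_isPrefix_of_sLt (Seq.isPrefix_ofList_append w u)
    (sLt_of_sLt_of_isPrefix h (Seq.isPrefix_ofList_append w' u'))

end Preorder

section Supremum

variable [Preorder α] {K L : Set (List α)}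

theorem PrefixFree.eq_or_sLt_of_lexLe (hK : PrefixFree K) {w v : List α} (hw : w ∈ K)
    (hv : v ∈ K) (h : lexLe (Seq.ofList w) (Seq.ofList v)) :
    w = v ∨ sLt (Seq.ofList w) (Seq.ofList v) :=
  (lexLe_iff.1 h).elim Or.inr fun h => Or.inl (hK.eq_of_isPrefix hw hv h)

theorem IsSupW.eq_ofList_of_not_sLt (hK : PrefixFree K) {sK : Seq α}
    (hsK : IsSupW (Seq.ofList '' K) sK) {w₀ : List α} (hw₀ : w₀ ∈ K)
    (hns : ¬ sLt (Seq.ofList w₀) sK) : sK = Seq.ofList w₀ := by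
  have hpre : IsPrefix (Seq.ofList w₀) sK :=
    (lexLe_iff.1 (hsK.1 _ ⟨w₀, hw₀, rfl⟩)).resolve_left hns
  refine lexLe_antisymm (hsK.2 _ ?_) (lexLe_iff.2 (Or.inr hpre))
  rintro _ ⟨w, hw, rfl⟩
  rw [lexLe_iff]
  rcases lexLe_iff.1 (hsK.1 _ ⟨w, hw, rfl⟩) with hlt | hwK
  · refine (sLt_or_isPrefix_of_sLt_of_isPrefix hlt hpre).imp_right fun h => ?_
    rw [hK.eq_of_isPrefix hw₀ hw h]
  · rcases hwK.total hpre with h | h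
    · exact Or.inr h
    · exact Or.inr (by rw [hK.eq_of_isPrefix hw₀ hw h])

theorem isSupW_image2_append_of_forall_sLt (hL : L.Nonempty) {sK : Seq α}
    (hsK : IsSupW (Seq.ofList '' K) sK) (hlt : ∀ w ∈ K, sLt (Seq.ofList w) sK) :
    IsSupW (Seq.ofList '' Set.image2 (· ++ ·) K L) sK := by
  constructor
  · rintro _ ⟨_, ⟨w, hw, v, -, rfl⟩, rfl⟩
    rw [Seq.ofList_append]
    exact Or.inl (Or.inl (sLt_of_isPrefix_of_sLt (Seq.isPrefix_ofList_append w _) (hlt w hw)))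
  · intro t ht
    refine hsK.2 t ?_
    rintro _ ⟨w, hw, rfl⟩
    obtain ⟨v, hv⟩ := hL
    refine lexLe_trans ?_ (ht _ ⟨w ++ v, Set.mem_image2_of_mem hw hv, rfl⟩)
    rw [Seq.ofList_append, lexLe_iff]
    exact Or.inr (Seq.isPrefix_ofList_append w _)

theorem isSupW_image2_append_of_mem (hK : PrefixFree K) (hL : L.Nonempty) {w₀ : List α}
    {sL : Seq α} (hw₀ : w₀ ∈ K) (hsK : IsSupW (Seq.ofList '' K) (Seq.ofList w₀))
    (hsL : IsSupW (Seq.ofList '' L) sL) :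
    IsSupW (Seq.ofList '' Set.image2 (· ++ ·) K L) ((Seq.ofList w₀).append sL) := by
  constructor
  · rintro _ ⟨_, ⟨w, hw, v, hv, rfl⟩, rfl⟩
    rw [Seq.ofList_append]
    rcases hK.eq_or_sLt_of_lexLe hw hw₀ (hsK.1 _ ⟨w, hw, rfl⟩) with rfl | hlt
    · exact lexLe_ofList_append_append_iff.2 (hsL.1 _ ⟨v, hv, rfl⟩)
    · exact Or.inl (Or.inl (sLt_ofList_append_append hlt _ _))
  · intro t ht
    have hwv : ∀ v ∈ L, lexLe ((Seq.ofList w₀).append (Seq.ofList v)) t := fun v hv => by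
      rw [← Seq.ofList_append]
      exact ht _ ⟨w₀ ++ v, Set.mem_image2_of_mem hw₀ hv, rfl⟩
    by_cases hpre : IsPrefix (Seq.ofList w₀) t
    · obtain ⟨t', rfl⟩ := hpre.exists_eq_ofList_append
      refine lexLe_ofList_append_append_iff.2 (hsL.2 t' ?_)
      rintro _ ⟨v, hv, rfl⟩
      exact lexLe_ofList_append_append_iff.1 (hwv v hv)
    -- Otherwise `t` exceeds `w₀` at a position inside `w₀`, hence exceeds every extension of `w₀`.
    obtain ⟨v, hv⟩ := hL
    have hlt : sLt (Seq.ofList w₀) t := by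
      rcases lexLe_iff.1 (hwv v hv) with h | h
      · have := sLt_or_isPrefix_of_isPrefix_of_sLt (Seq.isPrefix_ofList_append w₀ _) h
        exact this.resolve_right hpre
      · exact absurd ((Seq.isPrefix_ofList_append w₀ _).trans h) hpre
    exact Or.inl (Or.inl (sLt_of_isPrefix_of_sLt (Seq.isPrefix_ofList_append w₀ sL) hlt))

end Supremum

theorem sup_of_product_general [LinearOrder α] (K L : Set (List α))
    (hLne : L.Nonempty)
    (hKpf : PrefixFree K)
    (sK sL s : Seq α)
    (hsK : IsSupW (Seq.ofList '' K) sK) (hsL : IsSupW (Seq.ofList '' L) sL)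
    (hs : IsSupW (Seq.ofList '' (Set.image2 (· ++ ·) K L)) s) :
    ((∀ w ∈ K, sLt (Seq.ofList w) sK) → s = sK) ∧
    (¬ (∀ w ∈ K, sLt (Seq.ofList w) sK) → s = sK.append sL) ∧
    (s ∈ Seq.ofList '' Set.image2 (· ++ ·) K L ↔
      sK ∈ Seq.ofList '' K ∧ sL ∈ Seq.ofList '' L) := by
  have case₁ : (∀ w ∈ K, sLt (Seq.ofList w) sK) → s = sK := fun hlt =>
    hs.unique (isSupW_image2_append_of_forall_sLt hLne hsK hlt)
  have max_mem : ¬ (∀ w ∈ K, sLt (Seq.ofList w) sK) → ∃ w₀ ∈ K, sK = Seq.ofList w₀ := by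
    intro h
    push Not at h
    obtain ⟨w₀, hw₀, hns⟩ := h
    exact ⟨w₀, hw₀, hsK.eq_ofList_of_not_sLt hKpf hw₀ hns⟩
  have case₂ : ¬ (∀ w ∈ K, sLt (Seq.ofList w) sK) → s = sK.append sL := fun h => by
    obtain ⟨w₀, hw₀, rfl⟩ := max_mem h
    exact hs.unique (isSupW_image2_append_of_mem hKpf hLne hw₀ hsK hsL)
  refine ⟨case₁, case₂, ⟨?_, ?_⟩⟩
  · rintro ⟨_, ⟨w, hw, v, hv, rfl⟩, hwv⟩
    rw [Seq.ofList_append] at hwv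
    have hnot : ¬ ∀ w ∈ K, sLt (Seq.ofList w) sK := fun hlt => by
      have h := hlt w hw
      rw [← case₁ hlt, ← hwv] at h
      exact sLt_irrefl _ (sLt_of_isPrefix_of_sLt (Seq.isPrefix_ofList_append w _) h)
    obtain ⟨w₀, hw₀, rfl⟩ := max_mem hnot
    rw [case₂ hnot] at hwv
    rcases hKpf.eq_or_sLt_of_lexLe hw hw₀ (hsK.1 _ ⟨w, hw, rfl⟩) with rfl | hlt
    · exact ⟨⟨w, hw, rfl⟩, v, hv, Seq.ofList_append_injective w hwv⟩
    · exact (sLt_irrefl _ (hwv ▸ sLt_ofList_append_append hlt (Seq.ofList v) sL)).elim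
  · rintro ⟨⟨w₀, hw₀, rfl⟩, v₀, hv₀, rfl⟩
    rw [case₂ fun hlt => sLt_irrefl _ (hlt w₀ hw₀)]
    exact ⟨w₀ ++ v₀, Set.mem_image2_of_mem hw₀ hv₀, Seq.ofList_append w₀ v₀⟩

theorem sup_of_product [LinearOrder α] (K L : Set (List α))
    (hKne : K.Nonempty) (hLne : L.Nonempty)
    (hKpf : PrefixFree K) (hLpf : PrefixFree L)
    (sK sL s : Seq α)
    (hsK : IsSupW (Seq.ofList '' K) sK) (hsL : IsSupW (Seq.ofList '' L) sL)
    (hs : IsSupW (Seq.ofList '' (Set.image2 (· ++ ·) K L)) s) :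
    ((∀ w ∈ K, sLt (Seq.ofList w) sK) → s = sK) ∧
    (¬ (∀ w ∈ K, sLt (Seq.ofList w) sK) → s = sK.append sL) ∧
    (s ∈ Seq.ofList '' Set.image2 (· ++ ·) K L ↔
      sK ∈ Seq.ofList '' K ∧ sL ∈ Seq.ofList '' L) :=
  sup_of_product_general K L hLne hKpf sK sL s hsK hsL hs
end

section
/- Let I be a countable well-ordered set with I = A ∪ B, and suppose o(A) = ω^{α₁}·a₁ + ... + ω^{αₙ}·aₙ and o(B) = ω^{α₁}·b₁ + ... + ω^{αₙ}·bₙ with α₁ > ... > αₙ ordinals and aᵢ, bᵢ ≥ 0 integers with max(aᵢ,bᵢ) ≥ 1. Then o(I) = ω^{α₁}·c₁ + ... + ω^{αₙ}·cₙ for some integers cᵢ with cᵢ ≤ aᵢ + bᵢ for all i and c₁ ≥ max(a₁, b₁). -/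
open Ordinal
noncomputable def deg (a : Ordinal) : Ordinal := Ordinal.log omega0 a
noncomputable def oType {ι : Type*} [LinearOrder ι] [WellFoundedLT ι] (S : Set ι) : Ordinal :=
  Ordinal.type (Subrel ((· < ·) : ι → ι → Prop) (· ∈ S))
noncomputable def cnfSum (n : ℕ) (e : Fin n → Ordinal) (c : Fin n → ℕ) : Ordinal :=
  (List.ofFn fun i => omega0 ^ (e i) * (c i)).sum
noncomputable def omegaSum (o : ℕ → Ordinal) : Ordinal :=
  ⨆ n, (List.ofFn fun i : Fin n => o i).sum

/-!
Write `W = ω ^ α₁`. Since `ω ^ α` is indecomposable (a set of type `ω ^ α` cannot be split into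
two pieces of smaller type, by induction on `α`), peeling initial segments of type `W` off `A ∪ B`
shows `o(A ∪ B) < W * (a₁ + b₁ + 1)`, so `o(A ∪ B) = W * c₁ + ρ` with `c₁ ≤ a₁ + b₁` and `ρ < W`.
Cutting `A ∪ B` at its initial segment of type `W * c₁` leaves a final segment of type `ρ`; its
traces on `A` and `B` are final segments of `A` and `B`, hence of types `ω ^ α₂ * a₂' + ⋯` and
`ω ^ α₂ * b₂' + ⋯` with `aᵢ' ≤ aᵢ`, `bᵢ' ≤ bᵢ`, and induction on `n` applies to them.
Finally `c₁ ≥ max a₁ b₁` because `o(A), o(B) ≤ o(A ∪ B)`.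
-/

namespace Ordinal

theorem exists_natCast_eq_of_lt {o : Ordinal} {N : ℕ} (h : o < N) : ∃ j : ℕ, o = j ∧ j < N := by
  obtain ⟨j, rfl⟩ := lt_omega0.1 (h.trans (natCast_lt_omega0 N))
  exact ⟨j, rfl, by exact_mod_cast h⟩

theorem add_mul_natCast_eq_mul_add_one (W : Ordinal) (j : ℕ) : W + W * j = W * (j + 1 : ℕ) := by
  rw [add_comm j 1, Nat.cast_add, Nat.cast_one, mul_add, mul_one]

end Ordinal

section OrderType

variable {ι : Type*} [LinearOrder ι] [WellFoundedLT ι]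

theorem oType_mono {S T : Set ι} (h : S ⊆ T) : oType S ≤ oType T :=
  type_mono h

theorem oType_eq_zero_iff {S : Set ι} : oType S = 0 ↔ S = ∅ := by
  rw [oType, type_eq_zero_iff_isEmpty]
  exact Set.isEmpty_coe_sort

theorem oType_inter_Iio {S : Set ι} {x : ι} (hx : x ∈ S) :
    oType (S ∩ Set.Iio x) = typein (Subrel (· < ·) (· ∈ S)) ⟨x, hx⟩ :=
  RelIso.ordinalType_congr ⟨(Equiv.subtypeSubtypeEquivSubtypeInter (· ∈ S) (· < x)).symm, Iff.rfl⟩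

theorem exists_isLowerSet_oType_inter_eq {S : Set ι} {o : Ordinal} (h : o ≤ oType S) :
    ∃ D : Set ι, IsLowerSet D ∧ oType (S ∩ D) = o := by
  rcases h.lt_or_eq with h | rfl
  · obtain ⟨⟨x, hx⟩, rfl⟩ := typein_surj _ h
    exact ⟨Set.Iio x, isLowerSet_Iio x, oType_inter_Iio hx⟩
  · exact ⟨Set.univ, isLowerSet_univ, by rw [Set.inter_univ]⟩

theorem oType_eq_add_of_isLowerSet (S : Set ι) {D : Set ι} (hD : IsLowerSet D) :
    oType S = oType (S ∩ D) + oType (S \ D) := by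
  let f : ↥(S ∩ D) ⊕ ↥(S \ D) → S := Sum.elim (fun a => ⟨a, a.2.1⟩) (fun a => ⟨a, a.2.1⟩)
  have hf : ∀ a b, Sum.Lex (· < ·) (· < ·) a b → f a < f b := by
    rintro (⟨a, ha⟩ | ⟨a, ha⟩) (⟨b, hb⟩ | ⟨b, hb⟩) (h | h | h)
    exacts [h, lt_of_not_ge fun hba => hb.2 (hD hba ha.2), h]
  have hsurj : Function.Surjective f := by
    rintro ⟨y, hy⟩
    by_cases hyD : y ∈ D
    exacts [⟨.inl ⟨y, hy, hyD⟩, rfl⟩, ⟨.inr ⟨y, hy, hyD⟩, rfl⟩]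
  rw [oType, oType, oType, ← type_sum_lex]
  exact (RelIso.ofSurjective (RelEmbedding.ofMonotone f hf) hsurj).ordinalType_congr.symm

theorem exists_isLowerSet_oType_sdiff_eq_mod (S : Set ι) (W : Ordinal) :
    ∃ D : Set ι, IsLowerSet D ∧ oType (S \ D) = oType S % W := by
  obtain ⟨D, hD, hSD⟩ := exists_isLowerSet_oType_inter_eq (mul_div_le (oType S) W)
  refine ⟨D, hD, (add_right_inj (W * (oType S / W))).1 ?_⟩
  rw [div_add_mod, ← hSD, ← oType_eq_add_of_isLowerSet S hD]

theorem oType_sdiff_lt_mul {W : Ordinal} {m : ℕ} {A D : Set ι} (hD : IsLowerSet D)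
    (hAD : W ≤ oType (A ∩ D)) (hA : oType A < W * (m + 1 : ℕ)) : oType (A \ D) < W * m := by
  rw [oType_eq_add_of_isLowerSet A hD, ← add_mul_natCast_eq_mul_add_one] at hA
  exact (add_lt_add_iff_left W).1 ((add_le_add_left hAD _).trans_lt hA)

theorem oType_union_lt_mul_add_one {W : Ordinal}
    (hW : ∀ A B : Set ι, oType A < W → oType B < W → oType (A ∪ B) < W) (m k : ℕ) {A B : Set ι}
    (hA : oType A < W * (m + 1 : ℕ)) (hB : oType B < W * (k + 1 : ℕ)) :
    oType (A ∪ B) < W * (m + k + 1 : ℕ) := by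
  -- Peel off the initial segment of `A ∪ B` of type `W`: `A` or `B` has type `W` on it already.
  rcases lt_or_ge (oType (A ∪ B)) W with hlt | hge
  · exact hlt.trans_le (le_mul_left W (by simp))
  obtain ⟨D, hD, hUD⟩ := exists_isLowerSet_oType_inter_eq hge
  have hlarge : W ≤ oType (A ∩ D) ∨ W ≤ oType (B ∩ D) := by
    by_contra! h
    exact (hW _ _ h.1 h.2).ne (by rw [← Set.union_inter_distrib_right, hUD])
  have htail : oType ((A ∪ B) \ D) < W * (m + k : ℕ) := by
    rw [Set.union_sdiff_distrib]
    rcases hlarge with hAD | hBD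
    · cases m with
      | zero => simpa using oType_sdiff_lt_mul hD hAD hA
      | succ m =>
        simpa [Nat.add_right_comm] using oType_union_lt_mul_add_one hW m k
          (oType_sdiff_lt_mul hD hAD hA) ((oType_mono Set.sdiff_subset).trans_lt hB)
    · cases k with
      | zero => simpa using oType_sdiff_lt_mul hD hBD hB
      | succ k =>
        simpa [Nat.add_assoc] using oType_union_lt_mul_add_one hW m k
          ((oType_mono Set.sdiff_subset).trans_lt hA) (oType_sdiff_lt_mul hD hBD hB)
  calc oType (A ∪ B) = W + oType ((A ∪ B) \ D) := by rw [oType_eq_add_of_isLowerSet _ hD, hUD]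
    _ < W + W * (m + k : ℕ) := (add_lt_add_iff_left W).2 htail
    _ = W * (m + k + 1 : ℕ) := add_mul_natCast_eq_mul_add_one W _
termination_by m + k

theorem oType_union_lt_omega0_opow {E : Ordinal} {A B : Set ι} (hA : oType A < ω ^ E)
    (hB : oType B < ω ^ E) : oType (A ∪ B) < ω ^ E := by
  induction E using WellFoundedLT.induction generalizing A B with
  | _ E IH =>
  rcases eq_or_ne E 0 with rfl | hE
  · rw [opow_zero, Order.lt_one_iff, oType_eq_zero_iff] at hA hB ⊢
    rw [hA, hB, Set.union_empty]
  obtain ⟨c₁, hc₁, m, hm⟩ := (lt_omega0_opow hE).1 hA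
  obtain ⟨c₂, hc₂, k, hk⟩ := (lt_omega0_opow hE).1 hB
  have hc : max c₁ c₂ < E := max_lt hc₁ hc₂
  have hbound : ∀ {c : Ordinal} {j : ℕ} {S : Set ι}, c ≤ max c₁ c₂ → oType S < ω ^ c * j →
      oType S < ω ^ max c₁ c₂ * (j + 1 : ℕ) := fun hle hS =>
    hS.trans_le (mul_le_mul' (opow_le_opow_right omega0_pos hle) (by simp))
  exact (oType_union_lt_mul_add_one (fun _ _ => IH _ hc) m k (hbound (le_max_left _ _) hm)
    (hbound (le_max_right _ _) hk)).trans (opow_mul_lt_opow (natCast_lt_omega0 _) hc)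

end OrderType

section CantorNormalForm

variable {n : ℕ}

theorem cnfSum_zero (e : Fin 0 → Ordinal) (c : Fin 0 → ℕ) : cnfSum 0 e c = 0 := rfl

theorem cnfSum_succ (e : Fin (n + 1) → Ordinal) (c : Fin (n + 1) → ℕ) :
    cnfSum (n + 1) e c = ω ^ e 0 * c 0 + cnfSum n (Fin.tail e) (Fin.tail c) := by
  simp [cnfSum, List.ofFn_succ, Fin.tail]

theorem cnfSum_lt_opow {e : Fin n → Ordinal} {E : Ordinal} (h : ∀ i, e i < E) (c : Fin n → ℕ) :
    cnfSum n e c < ω ^ E := by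
  induction n with
  | zero => exact opow_pos E omega0_pos
  | succ n IH =>
    rw [cnfSum_succ]
    exact isPrincipal_add_omega0_opow E (opow_mul_lt_opow (natCast_lt_omega0 _) (h 0))
      (IH (fun i => h i.succ) _)

theorem opow_mul_le_cnfSum (e : Fin (n + 1) → Ordinal) (c : Fin (n + 1) → ℕ) :
    ω ^ e 0 * c 0 ≤ cnfSum (n + 1) e c := by
  rw [cnfSum_succ]
  exact le_self_add

theorem cnfSum_lt_opow_mul {e : Fin (n + 1) → Ordinal} (he : StrictAnti e) (c : Fin (n + 1) → ℕ) :
    cnfSum (n + 1) e c < ω ^ e 0 * (c 0 + 1 : ℕ) := by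
  rw [cnfSum_succ, Nat.cast_succ, mul_add_one]
  exact (add_lt_add_iff_left _).2 (cnfSum_lt_opow (fun i => he (Fin.succ_pos i)) _)

theorem head_lt_of_cnfSum_lt {e : Fin (n + 1) → Ordinal} {c : Fin (n + 1) → ℕ} {k : ℕ}
    (h : cnfSum (n + 1) e c < ω ^ e 0 * k) : c 0 < k := by
  have := (opow_mul_le_cnfSum e c).trans_lt h
  exact_mod_cast (mul_lt_mul_iff_of_pos_left (opow_pos _ omega0_pos)).1 this

theorem exists_cnfSum_eq_of_add_eq {σ τ : Ordinal} (e : Fin n → Ordinal) {a : Fin n → ℕ}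
    (h : σ + τ = cnfSum n e a) : ∃ a' : Fin n → ℕ, (∀ i, a' i ≤ a i) ∧ τ = cnfSum n e a' := by
  induction n generalizing σ with
  | zero => exact ⟨a, fun _ => le_rfl, (add_eq_zero_iff.1 h).2⟩
  | succ n IH =>
    rw [cnfSum_succ] at h
    set W := ω ^ e 0
    rcases le_or_gt (W * a 0) σ with hσ | hσ
    · obtain ⟨σ', rfl⟩ := exists_add_of_le hσ
      rw [add_assoc, add_right_inj] at h
      obtain ⟨a', ha', hτ⟩ := IH (Fin.tail e) h
      refine ⟨Fin.cons 0 a', Fin.cases (Nat.zero_le _) ha', ?_⟩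
      rw [cnfSum_succ, Fin.cons_zero, Fin.tail_cons, Nat.cast_zero, mul_zero, zero_add, hτ]
    · obtain ⟨j, hj, hja⟩ :=
        exists_natCast_eq_of_lt ((lt_mul_iff_div_lt (opow_ne_zero _ omega0_ne_zero)).1 hσ)
      refine ⟨Fin.cons (a 0 - j) (Fin.tail a), Fin.cases (Nat.sub_le _ _) (fun _ => le_rfl), ?_⟩
      rw [cnfSum_succ, Fin.cons_zero, Fin.tail_cons]
      refine (add_right_inj σ).1 (h.trans ?_)
      -- `σ = W * j + σ % W`, and `σ % W < W` is absorbed by `W * (a 0 - j)`.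
      rw [← div_add_mod σ W, hj, add_assoc, ← add_assoc (σ % W),
        add_of_omega0_opow_le (mod_lt _ (opow_ne_zero _ omega0_ne_zero))
          (le_mul_left W (by exact_mod_cast Nat.sub_pos_of_lt hja)),
        ← add_assoc, ← mul_add, ← Nat.cast_add, Nat.add_sub_cancel' hja.le]

theorem head_le_of_cnfSum_le {e : Fin (n + 1) → Ordinal} (he : StrictAnti e)
    {a c : Fin (n + 1) → ℕ} (h : cnfSum (n + 1) e a ≤ cnfSum (n + 1) e c) : a 0 ≤ c 0 :=
  Nat.lt_succ_iff.1 (head_lt_of_cnfSum_lt (h.trans_lt (cnfSum_lt_opow_mul he c)))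

theorem exists_cnfSum_tail_eq_of_add_eq {σ τ : Ordinal} {e : Fin (n + 1) → Ordinal}
    {a : Fin (n + 1) → ℕ} (h : σ + τ = cnfSum (n + 1) e a) (hτ : τ < ω ^ e 0) :
    ∃ a' : Fin n → ℕ, (∀ i, a' i ≤ a i.succ) ∧ τ = cnfSum n (Fin.tail e) a' := by
  obtain ⟨a', ha', rfl⟩ := exists_cnfSum_eq_of_add_eq e h
  have h0 : a' 0 = 0 := Nat.lt_one_iff.1 (head_lt_of_cnfSum_lt (by rwa [Nat.cast_one, mul_one]))
  refine ⟨Fin.tail a', fun i => ha' i.succ, ?_⟩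
  rw [cnfSum_succ, h0, Nat.cast_zero, mul_zero, zero_add]

end CantorNormalForm

theorem exists_cnfSum_oType_union {ι : Type*} [LinearOrder ι] [WellFoundedLT ι] {n : ℕ}
    {e : Fin n → Ordinal} (he : StrictAnti e) {a b : Fin n → ℕ} {A B : Set ι}
    (hA : oType A = cnfSum n e a) (hB : oType B = cnfSum n e b) :
    ∃ c : Fin n → ℕ, oType (A ∪ B) = cnfSum n e c ∧ ∀ i, c i ≤ a i + b i := by
  induction n generalizing A B with
  | zero =>
    rw [cnfSum_zero, oType_eq_zero_iff] at hA hB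
    refine ⟨0, ?_, fun i => i.elim0⟩
    rw [cnfSum_zero, oType_eq_zero_iff, hA, hB, Set.union_empty]
  | succ n IH =>
    set W := ω ^ e 0
    have hW : W ≠ 0 := opow_ne_zero _ omega0_ne_zero
    have hbound : oType (A ∪ B) < W * (a 0 + b 0 + 1 : ℕ) :=
      oType_union_lt_mul_add_one (fun _ _ => oType_union_lt_omega0_opow) _ _
        (hA ▸ cnfSum_lt_opow_mul he a) (hB ▸ cnfSum_lt_opow_mul he b)
    obtain ⟨c₀, hc₀, hc₀le⟩ := exists_natCast_eq_of_lt ((lt_mul_iff_div_lt hW).1 hbound)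
    obtain ⟨D, hD, hUD⟩ := exists_isLowerSet_oType_sdiff_eq_mod (A ∪ B) W
    have hsmall : oType ((A ∪ B) \ D) < W := hUD ▸ mod_lt _ hW
    obtain ⟨a', ha', hA'⟩ := exists_cnfSum_tail_eq_of_add_eq
      ((oType_eq_add_of_isLowerSet A hD).symm.trans hA)
      ((oType_mono (Set.sdiff_subset_sdiff_left Set.subset_union_left)).trans_lt hsmall)
    obtain ⟨b', hb', hB'⟩ := exists_cnfSum_tail_eq_of_add_eq
      ((oType_eq_add_of_isLowerSet B hD).symm.trans hB)
      ((oType_mono (Set.sdiff_subset_sdiff_left Set.subset_union_right)).trans_lt hsmall)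
    obtain ⟨c', hc', hc'le⟩ := IH (e := Fin.tail e) (he.comp_strictMono Fin.strictMono_succ) hA' hB'
    refine ⟨Fin.cons c₀ c', ?_,
      Fin.cases (Nat.lt_succ_iff.1 hc₀le) fun i => (hc'le i).trans (add_le_add (ha' i) (hb' i))⟩
    rw [cnfSum_succ, Fin.cons_zero, Fin.tail_cons, ← hc', ← Set.union_sdiff_distrib, hUD, ← hc₀,
      div_add_mod]

theorem union_cnf_general {ι : Type*} [LinearOrder ι] [WellFoundedLT ι]
    (A B : Set ι) (n : ℕ) (e : Fin n → Ordinal) (he : StrictAnti e)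
    (a b : Fin n → ℕ)
    (hA : oType A = cnfSum n e a) (hB : oType B = cnfSum n e b) :
    ∃ c : Fin n → ℕ, oType (A ∪ B) = cnfSum n e c ∧
      (∀ i, c i ≤ a i + b i) ∧
      ∀ h : 0 < n, max (a ⟨0, h⟩) (b ⟨0, h⟩) ≤ c ⟨0, h⟩ := by
  obtain ⟨c, hc, hcle⟩ := exists_cnfSum_oType_union he hA hB
  refine ⟨c, hc, hcle, fun hn => ?_⟩
  obtain ⟨m, rfl⟩ := Nat.exists_eq_add_one.2 hn
  have hsub : ∀ {S : Set ι}, S ⊆ A ∪ B → oType S ≤ cnfSum (m + 1) e c := fun h => hc ▸ oType_mono h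
  exact max_le (head_le_of_cnfSum_le he (hA ▸ hsub Set.subset_union_left))
    (head_le_of_cnfSum_le he (hB ▸ hsub Set.subset_union_right))

theorem union_cnf {ι : Type*} [LinearOrder ι] [WellFoundedLT ι] [Countable ι]
    (A B : Set ι) (n : ℕ) (e : Fin n → Ordinal) (he : StrictAnti e)
    (a b : Fin n → ℕ) (hab : ∀ i, 1 ≤ max (a i) (b i))
    (hA : oType A = cnfSum n e a) (hB : oType B = cnfSum n e b) :
    ∃ c : Fin n → ℕ, oType (A ∪ B) = cnfSum n e c ∧
      (∀ i, c i ≤ a i + b i) ∧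
      ∀ h : 0 < n, max (a ⟨0, h⟩) (b ⟨0, h⟩) ≤ c ⟨0, h⟩ :=
  union_cnf_general A B n e he a b hA hB
end

section
/- If A and B are subsets of a common well-order with order types satisfying o(A) < ω^α · N and o(B) < ω^β · M for ordinals α, β and positive integers N, M, then o(A ∪ B) < ω^{max(α,β)} · (N + M − 1). -/
open Ordinal
/-!
Let `♯` be the Hessenberg natural sum. Ranking `x ∈ A ∪ B` by `o(A ∩ Iio x) ♯ o(B ∩ Iio x)` is
strictly increasing and stays below `o(A) ♯ o(B)`, so `o(A ∪ B) ≤ o(A) ♯ o(B)`.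

By induction on `γ`, `P = ω ^ γ` is closed under `♯`. Writing `x = P q + r` and `y = P q' + s` with
`r, s < P`, this gives `x ♯ y ≤ P (q ♯ q') + (r ♯ s) < P (q ♯ q' + 1)`; for `x < P N`, `y < P M`
the quotients are natural numbers `q < N`, `q' < M`, and `q ♯ q' + 1 = q + q' + 1 ≤ N + M - 1`.
-/

namespace Ordinal

noncomputable def nadd (a b : Ordinal.{u}) : Ordinal.{u} :=
  max (⨆ x : Set.Iio a, Order.succ (nadd x.1 b)) (⨆ x : Set.Iio b, Order.succ (nadd a x.1))
termination_by (a, b)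
decreasing_by all_goals cases x; decreasing_tactic

infixl:65 " ♯ " => nadd

variable {a b c d : Ordinal}

theorem nadd_def (a b : Ordinal) : a ♯ b =
    max (⨆ x : Set.Iio a, Order.succ (x.1 ♯ b)) (⨆ x : Set.Iio b, Order.succ (a ♯ x.1)) := by
  rw [nadd]

theorem nadd_comm (a b : Ordinal) : a ♯ b = b ♯ a := by
  rw [nadd_def, nadd_def, max_comm]
  congr with x <;> rw [nadd_comm]
termination_by (a, b)
decreasing_by all_goals cases x; decreasing_tactic

theorem nadd_lt_nadd_left (h : b < c) (a : Ordinal) : a ♯ b < a ♯ c := by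
  rw [nadd_def a c]
  exact (Order.lt_succ _).trans_le
    ((le_ciSup bddAbove_of_small (⟨b, h⟩ : Set.Iio c)).trans (le_max_right _ _))

theorem nadd_lt_nadd_right (h : b < c) (a : Ordinal) : b ♯ a < c ♯ a := by
  simpa only [nadd_comm _ a] using nadd_lt_nadd_left h a

theorem nadd_le_nadd_left (h : b ≤ c) (a : Ordinal) : a ♯ b ≤ a ♯ c :=
  h.eq_or_lt.elim (fun h => h ▸ le_rfl) fun h => (nadd_lt_nadd_left h a).le

theorem nadd_le_nadd_right (h : b ≤ c) (a : Ordinal) : b ♯ a ≤ c ♯ a := by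
  simpa only [nadd_comm _ a] using nadd_le_nadd_left h a

theorem nadd_lt_nadd_of_lt_of_le (hab : a < b) (hcd : c ≤ d) : a ♯ c < b ♯ d :=
  (nadd_lt_nadd_right hab c).trans_le (nadd_le_nadd_left hcd b)

theorem nadd_lt_nadd_of_le_of_lt (hab : a ≤ b) (hcd : c < d) : a ♯ c < b ♯ d :=
  (nadd_le_nadd_right hab c).trans_lt (nadd_lt_nadd_left hcd b)

theorem nadd_le_iff : b ♯ c ≤ a ↔ (∀ b' < b, b' ♯ c < a) ∧ ∀ c' < c, b ♯ c' < a := by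
  refine ⟨fun h => ⟨fun b' hb => (nadd_lt_nadd_right hb c).trans_le h,
    fun c' hc => (nadd_lt_nadd_left hc b).trans_le h⟩, fun ⟨h₁, h₂⟩ => ?_⟩
  rw [nadd_def]
  exact max_le (ciSup_le' fun x => Order.succ_le_of_lt (h₁ x.1 x.2))
    (ciSup_le' fun x => Order.succ_le_of_lt (h₂ x.1 x.2))

theorem nadd_zero (a : Ordinal) : a ♯ 0 = a := by
  induction a using WellFoundedLT.induction with
  | _ a IH =>
  refine le_antisymm (nadd_le_iff.2 ⟨fun b hb => (IH b hb).symm ▸ hb,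
    fun b hb => (not_lt_zero hb).elim⟩) (le_of_forall_lt fun b hb => ?_)
  rw [← IH b hb]
  exact nadd_lt_nadd_right hb 0

theorem nadd_add_one (a b : Ordinal) : a ♯ (b + 1) = a ♯ b + 1 := by
  induction a using WellFoundedLT.induction with
  | _ a IH =>
  refine le_antisymm (nadd_le_iff.2 ⟨fun a' ha => ?_, fun b' hb => ?_⟩)
    (Order.add_one_le_of_lt (nadd_lt_nadd_left (Order.lt_add_one_iff.2 le_rfl) a))
  · rw [IH a' ha]
    exact Order.lt_add_one_iff.2 (Order.add_one_le_of_lt (nadd_lt_nadd_right ha b))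
  · exact Order.lt_add_one_iff.2 (nadd_le_nadd_left (Order.lt_add_one_iff.1 hb) a)

theorem natCast_nadd_natCast (m n : ℕ) : (m : Ordinal) ♯ n = ((m + n : ℕ) : Ordinal) := by
  induction n with
  | zero => simp only [Nat.cast_zero, nadd_zero, add_zero]
  | succ n ih => rw [Nat.cast_succ, nadd_add_one, ih, ← add_assoc, Nat.cast_succ]

section Principal

variable {P : Ordinal}

theorem IsPrincipal.nadd_lt_mul_nadd_div_add_nadd_mod_of_lt (hP : IsPrincipal (· ♯ ·) P)
    {x x' y : Ordinal} (hx' : x' < x)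
    (hbound : x' ♯ y ≤ P * (x' / P ♯ y / P) + (x' % P ♯ y % P)) :
    x' ♯ y < P * (x / P ♯ y / P) + (x % P ♯ y % P) := by
  rcases (div_le_left hx'.le P).lt_or_eq with hq | hq
  · have hP0 : P ≠ 0 := by rintro rfl; simp at hq
    calc x' ♯ y ≤ P * (x' / P ♯ y / P) + (x' % P ♯ y % P) := hbound
      _ < P * (x' / P ♯ y / P) + P := add_lt_add_right (hP (mod_lt _ hP0) (mod_lt _ hP0)) _
      _ = P * Order.succ (x' / P ♯ y / P) := (mul_succ _ _).symm
      _ ≤ P * (x / P ♯ y / P) :=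
        mul_le_mul_right (Order.succ_le_of_lt (nadd_lt_nadd_right hq _)) _
      _ ≤ P * (x / P ♯ y / P) + (x % P ♯ y % P) := le_self_add
  · have hr : x' % P < x % P := by
      rw [← div_add_mod x' P, ← div_add_mod x P, hq] at hx'
      exact lt_of_add_lt_add_left hx'
    calc x' ♯ y ≤ P * (x / P ♯ y / P) + (x' % P ♯ y % P) := hq ▸ hbound
      _ < P * (x / P ♯ y / P) + (x % P ♯ y % P) := add_lt_add_right (nadd_lt_nadd_right hr _) _

theorem IsPrincipal.nadd_le_mul_nadd_div_add_nadd_mod (hP : IsPrincipal (· ♯ ·) P) (x y : Ordinal) :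
    x ♯ y ≤ P * (x / P ♯ y / P) + (x % P ♯ y % P) := by
  induction x using WellFoundedLT.induction generalizing y with
  | _ x IHx =>
  induction y using WellFoundedLT.induction with
  | _ y IHy =>
  refine nadd_le_iff.2
    ⟨fun x' hx' => hP.nadd_lt_mul_nadd_div_add_nadd_mod_of_lt hx' (IHx x' hx' y), fun y' hy' => ?_⟩
  have h := hP.nadd_lt_mul_nadd_div_add_nadd_mod_of_lt (y := x) hy' (by
    rw [nadd_comm y', nadd_comm (y' / P), nadd_comm (y' % P)]
    exact IHy y' hy')
  rwa [nadd_comm y', nadd_comm (y / P), nadd_comm (y % P)] at h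

theorem IsPrincipal.nadd_lt_mul_of_lt_mul (hP : IsPrincipal (· ♯ ·) P) {x y : Ordinal}
    {N M : ℕ} (hx : x < P * N) (hy : y < P * M) : x ♯ y < P * ((N + M - 1 : ℕ) : Ordinal) := by
  have hP0 : P ≠ 0 := by rintro rfl; simp at hx
  have hxN := (lt_mul_iff_div_lt hP0).1 hx
  have hyM := (lt_mul_iff_div_lt hP0).1 hy
  obtain ⟨q, hq⟩ := lt_omega0.1 (hxN.trans (natCast_lt_omega0 N))
  obtain ⟨q', hq'⟩ := lt_omega0.1 (hyM.trans (natCast_lt_omega0 M))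
  rw [hq, Nat.cast_lt] at hxN
  rw [hq', Nat.cast_lt] at hyM
  calc x ♯ y ≤ P * (x / P ♯ y / P) + (x % P ♯ y % P) :=
        hP.nadd_le_mul_nadd_div_add_nadd_mod x y
    _ < P * ((q + q' : ℕ) : Ordinal) + P := by
      rw [hq, hq', natCast_nadd_natCast]
      exact add_lt_add_right (hP (mod_lt x hP0) (mod_lt y hP0)) _
    _ = P * ((q + q' + 1 : ℕ) : Ordinal) := by rw [Nat.cast_succ, mul_add_one]
    _ ≤ P * ((N + M - 1 : ℕ) : Ordinal) := mul_le_mul_right (Nat.cast_le.2 (by omega)) _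

end Principal

theorem isPrincipal_nadd_omega0_opow (γ : Ordinal) : IsPrincipal (· ♯ ·) (ω ^ γ) := by
  induction γ using WellFoundedLT.induction with
  | _ γ IH =>
  intro r s hr hs
  rcases eq_or_ne γ 0 with rfl | hγ
  · rw [opow_zero, Order.lt_one_iff] at hr hs ⊢
    rw [hr, hs]
    exact nadd_zero 0
  obtain ⟨c, hc, n, hn⟩ := (lt_omega0_opow hγ).1 hr
  obtain ⟨c', hc', n', hn'⟩ := (lt_omega0_opow hγ).1 hs
  have hle : ∀ {e : Ordinal} {k : ℕ}, e ≤ max c c' → k ≤ max n n' →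
      ω ^ e * k ≤ ω ^ max c c' * (max n n' : ℕ) := fun he hk =>
    mul_le_mul' (opow_le_opow_right omega0_pos he) (Nat.cast_le.2 hk)
  exact (lt_omega0_opow hγ).2 ⟨max c c', max_lt hc hc', _,
    (IH _ (max_lt hc hc')).nadd_lt_mul_of_lt_mul
      (hn.trans_le (hle (le_max_left _ _) (le_max_left _ _)))
      (hn'.trans_le (hle (le_max_right _ _) (le_max_right _ _)))⟩

theorem type_le_of_strictMono {α : Type*} [LinearOrder α] [WellFoundedLT α]
    {f : α → Ordinal} (hf : StrictMono f) (hc : ∀ x, f x < c) : typeLT α ≤ c := by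
  let g : α → c.ToType := fun x => ToType.mk ⟨f x, hc x⟩
  have hg : StrictMono g := fun x y hxy => ToType.mk.lt_iff_lt.2 (hf hxy)
  simpa using (OrderEmbedding.ofStrictMono g hg).ltEmbedding.ordinal_type_le

end Ordinal

section OrderType

variable {ι : Type*} [LinearOrder ι] [WellFoundedLT ι]

theorem oType_inter_Iio_lt {S : Set ι} {x : ι} (hx : x ∈ S) : oType (S ∩ Set.Iio x) < oType S :=
  PrincipalSeg.ordinal_type_lt
    { toFun := fun a => ⟨a.1, a.2.1⟩
      inj' := fun _ _ h => Subtype.ext (Subtype.mk_eq_mk.1 h)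
      map_rel_iff' := Iff.rfl
      top := ⟨x, hx⟩
      mem_range_iff_rel' := fun b => ⟨fun ⟨a, ha⟩ => ha ▸ a.2.2, fun hb => ⟨⟨b.1, b.2, hb⟩, rfl⟩⟩ }

theorem oType_inter_Iio_lt_of_lt {S : Set ι} {x y : ι} (hx : x ∈ S) (hxy : x < y) :
    oType (S ∩ Set.Iio x) < oType (S ∩ Set.Iio y) := by
  simpa [Set.inter_assoc, Set.Iio_inter_Iio, hxy.le] using
    oType_inter_Iio_lt (S := S ∩ Set.Iio y) ⟨hx, hxy⟩

theorem oType_union_le_nadd (A B : Set ι) : oType (A ∪ B) ≤ oType A ♯ oType B := by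
  let f : ↥(A ∪ B) → Ordinal := fun z => oType (A ∩ Set.Iio z.1) ♯ oType (B ∩ Set.Iio z.1)
  have hf : StrictMono f := by
    rintro ⟨z, hz | hz⟩ ⟨w, -⟩ (hzw : z < w)
    · exact nadd_lt_nadd_of_lt_of_le (oType_inter_Iio_lt_of_lt hz hzw)
        (oType_mono (Set.inter_subset_inter_right _ (Set.Iio_subset_Iio hzw.le)))
    · exact nadd_lt_nadd_of_le_of_lt
        (oType_mono (Set.inter_subset_inter_right _ (Set.Iio_subset_Iio hzw.le)))
        (oType_inter_Iio_lt_of_lt hz hzw)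
  refine type_le_of_strictMono hf ?_
  rintro ⟨z, hz | hz⟩
  · exact nadd_lt_nadd_of_lt_of_le (oType_inter_Iio_lt hz) (oType_mono Set.inter_subset_left)
  · exact nadd_lt_nadd_of_le_of_lt (oType_mono Set.inter_subset_left) (oType_inter_Iio_lt hz)

end OrderType

theorem union_lt_bound_general {ι : Type*} [LinearOrder ι] [WellFoundedLT ι]
    (A B : Set ι) (α β : Ordinal) (N M : ℕ)
    (hA : oType A < omega0 ^ α * N) (hB : oType B < omega0 ^ β * M) :
    oType (A ∪ B) < omega0 ^ (max α β) * (N + M - 1) := by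
  have hA' : oType A < ω ^ max α β * N :=
    hA.trans_le (mul_le_mul_left (opow_le_opow_right omega0_pos (le_max_left α β)) _)
  have hB' : oType B < ω ^ max α β * M :=
    hB.trans_le (mul_le_mul_left (opow_le_opow_right omega0_pos (le_max_right α β)) _)
  calc oType (A ∪ B) ≤ oType A ♯ oType B := oType_union_le_nadd A B
    _ < ω ^ max α β * ((N + M - 1 : ℕ) : Ordinal) :=
      (isPrincipal_nadd_omega0_opow _).nadd_lt_mul_of_lt_mul hA' hB'
    _ = ω ^ max α β * (N + M - 1) := by rw [natCast_sub, Nat.cast_add, Nat.cast_one]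

theorem union_lt_bound {ι : Type*} [LinearOrder ι] [WellFoundedLT ι]
    (A B : Set ι) (α β : Ordinal) (N M : ℕ) (hN : 0 < N) (hM : 0 < M)
    (hA : oType A < omega0 ^ α * N) (hB : oType B < omega0 ^ β * M) :
    oType (A ∪ B) < omega0 ^ (max α β) * (N + M - 1) :=
  union_lt_bound_general A B α β N M hA hB
end
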